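/- Let a, b be nonzero vectors in ℝ³ with a × b = 0 and a + b ≠ 0, and set c = -(a+b). Then the vectors a/|a| + b/|b| + c/|c| and |a|²b + |b|²a are nonzero and point in the same direction; that is, their inner product is positive. -/

import Mathlib

/-!
Collinearity gives `b = t • a` with `t ≠ 0, -1`. Each of `a, b, c` normalizes to `±a/‖a‖`, so the
first vector is `(1 + sign t - sign (1 + t)) • a/‖a‖`, while the second is `‖a‖² t (1 + t) • a`.
The sign factor is exactly the sign of `t (1 + t)`, so the inner product is `‖a‖³ |t (1 + t)| > 0`.
-/

open scoped InnerProductSpace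

noncomputable section

abbrev E3 := EuclideanSpace ℝ (Fin 3)

/-- The cross product on ℝ³. -/
def cross3 (a b : E3) : E3 :=
  WithLp.toLp 2 ![a 1 * b 2 - a 2 * b 1, a 2 * b 0 - a 0 * b 2, a 0 * b 1 - a 1 * b 0]

theorem cross3_eq_crossProduct (a b : E3) :
    cross3 a b = WithLp.toLp 2 (crossProduct (WithLp.ofLp a) (WithLp.ofLp b)) := by
  ext i; fin_cases i <;> simp [cross3, cross_apply]

theorem exists_eq_smul_of_cross3_eq_zero {a b : E3} (ha : a ≠ 0) (h : cross3 a b = 0) :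
    ∃ t : ℝ, b = t • a := by
  have ha' : WithLp.ofLp a ≠ 0 := by simpa using ha
  have hdep : ¬ LinearIndependent ℝ ![WithLp.ofLp a, WithLp.ofLp b] := by
    rw [← crossProduct_ne_zero_iff_linearIndependent, not_not]
    simpa [cross3_eq_crossProduct] using h
  rw [LinearIndependent.pair_iff' ha', not_forall_not] at hdep
  obtain ⟨t, ht⟩ := hdep
  exact ⟨t, WithLp.ofLp_injective 2 ht.symm⟩

theorem inv_norm_smul_smul {F : Type*} [NormedAddCommGroup F] [NormedSpace ℝ F]
    (t : ℝ) (x : F) :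
    ‖t • x‖⁻¹ • (t • x) = (SignType.sign t : ℝ) • (‖x‖⁻¹ • x) := by
  have hsign : |t|⁻¹ * t = SignType.sign t := by
    rcases lt_trichotomy t 0 with h | rfl | h
    · simp [abs_of_neg h, sign_neg h, h.ne]
    · simp
    · simp [abs_of_pos h, sign_pos h, h.ne']
  rw [norm_smul, Real.norm_eq_abs, mul_inv, smul_smul, smul_smul, mul_right_comm, hsign]

theorem sign_sum_mul_eq_abs (t : ℝ) :
    (1 + SignType.sign t - SignType.sign (1 + t) : ℝ) * (t * (1 + t)) = |t * (1 + t)| := by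
  rcases lt_trichotomy t 0 with h | rfl | h
  · rcases lt_trichotomy (1 + t) 0 with h1 | h1 | h1
    · simp [sign_neg h, sign_neg h1, abs_of_pos (mul_pos_of_neg_of_neg h h1)]
    · simp [h1]
    · simp [sign_neg h, sign_pos h1, abs_of_neg (mul_neg_of_neg_of_pos h h1)]
  · simp
  · have h1 : 0 < 1 + t := by linarith
    simp [sign_pos h, sign_pos h1, abs_of_pos (mul_pos h h1)]

theorem inner_sum_inv_norm_smul_collinear {F : Type*} [NormedAddCommGroup F]
    [InnerProductSpace ℝ F] (a : F) (t : ℝ) :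
    ⟪‖a‖⁻¹ • a + ‖t • a‖⁻¹ • (t • a) + ‖-(a + t • a)‖⁻¹ • (-(a + t • a)),
        ‖a‖ ^ 2 • (t • a) + ‖t • a‖ ^ 2 • a⟫_ℝ = ‖a‖ ^ 3 * |t * (1 + t)| := by
  have hc : -(a + t • a) = (-(1 + t)) • a := by module
  have hsum : ‖a‖⁻¹ • a + ‖t • a‖⁻¹ • (t • a) + ‖-(a + t • a)‖⁻¹ • (-(a + t • a)) =
      ((1 + SignType.sign t - SignType.sign (1 + t) : ℝ) * ‖a‖⁻¹) • a := by
    rw [hc, inv_norm_smul_smul, inv_norm_smul_smul, Left.sign_neg, SignType.coe_neg]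
    module
  have hkey : ‖a‖ ^ 2 • (t • a) + ‖t • a‖ ^ 2 • a = (‖a‖ ^ 2 * (t * (1 + t))) • a := by
    rw [norm_smul, Real.norm_eq_abs, mul_pow, sq_abs]
    module
  rw [hsum, hkey, real_inner_smul_left, real_inner_smul_right, real_inner_self_eq_norm_sq,
    ← sign_sum_mul_eq_abs]
  rcases eq_or_ne ‖a‖ 0 with h | h
  · simp [h]
  · field_simp

theorem stmt6 (a b : E3) (ha : a ≠ 0) (hb : b ≠ 0) (hab : a + b ≠ 0)
    (hdeg : cross3 a b = 0) :
    (‖a‖⁻¹ • a + ‖b‖⁻¹ • b + ‖-(a + b)‖⁻¹ • (-(a + b))) ≠ 0 ∧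
    (‖a‖ ^ 2 • b + ‖b‖ ^ 2 • a) ≠ 0 ∧
    0 < ⟪‖a‖⁻¹ • a + ‖b‖⁻¹ • b + ‖-(a + b)‖⁻¹ • (-(a + b)),
        ‖a‖ ^ 2 • b + ‖b‖ ^ 2 • a⟫_ℝ := by
  obtain ⟨t, rfl⟩ := exists_eq_smul_of_cross3_eq_zero ha hdeg
  have ht : t ≠ 0 := by rintro rfl; simp at hb
  have ht1 : 1 + t ≠ 0 := fun h =>
    hab (by rw [show a + t • a = (1 + t) • a by module, h, zero_smul])
  have hpos : 0 < ⟪‖a‖⁻¹ • a + ‖t • a‖⁻¹ • (t • a) + ‖-(a + t • a)‖⁻¹ • (-(a + t • a)),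
      ‖a‖ ^ 2 • (t • a) + ‖t • a‖ ^ 2 • a⟫_ℝ := by
    rw [inner_sum_inv_norm_smul_collinear]
    have := norm_pos_iff.mpr ha
    positivity
  refine ⟨fun h => ?_, fun h => ?_, hpos⟩ <;>
    simp only [h, inner_zero_left, inner_zero_right, lt_irrefl] at hpos
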